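/- Let q = p^α, where p is an odd prime and α ≥ 1 is an integer, and let A, B, C, D, E be complex-valued Dirichlet characters mod q. Then ₃F₂(A,B,C;D,E|1) = (A·B·C·D·E)(−1) · ₃F₂(A, A·D̄, A·Ē; A·B̄, A·C̄ | 1). -/

import Mathlib

open Finset

/-- The complex-conjugate Dirichlet character. -/
noncomputable def conjChar {q : ℕ} (A : DirichletCharacter ℂ q) : DirichletCharacter ℂ q :=
  A.ringHomComp (starRingEnd ℂ)

/-- The binomial coefficient `binom(A,B) = B(-1)/q * J(A, B̄)` for Dirichlet characters. -/
noncomputable def dBinom {q : ℕ} [NeZero q] (A B : DirichletCharacter ℂ q) : ℂ :=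
  B (-1) / q * jacobiSum A (conjChar B)

/-- The hypergeometric function `₃F₂` for Dirichlet characters. -/
noncomputable def threeF₂ {q : ℕ} [NeZero q] (A B C D E : DirichletCharacter ℂ q)
    (x : ZMod q) : ℂ :=
  (q / (Nat.totient q : ℂ)) *
    ∑ᶠ χ : DirichletCharacter ℂ q,
      dBinom (A * χ) χ * dBinom (B * χ) (D * χ) * dBinom (C * χ) (E * χ) * χ x

/-!
Substitute `χ ↦ (A χ)⁻¹` in the sum defining the left-hand side. Since conjugation is inversion
on characters, each binomial of the transformed sum takes the shape `binom(Y⁻¹, X⁻¹)`, and the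
symmetry `J(A, B) = J(B, A)` of Jacobi sums (from `x ↦ 1 - x`) gives
`binom(Y⁻¹, X⁻¹) = X(-1) Y(-1) binom(X, Y)`. The resulting signs multiply to
`(ABCDE)(-1) χ(-1)⁶ = (ABCDE)(-1)`.
-/

section

variable {q : ℕ}

lemma conjChar_eq_inv (χ : DirichletCharacter ℂ q) : conjChar χ = χ⁻¹ :=
  MulChar.star_eq_inv χ

lemma DirichletCharacter.apply_neg_one_mul_self (χ : DirichletCharacter ℂ q) :
    χ (-1) * χ (-1) = 1 := by
  rw [← map_mul, neg_mul_neg, one_mul, map_one]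

lemma DirichletCharacter.inv_apply_neg_one (χ : DirichletCharacter ℂ q) : χ⁻¹ (-1) = χ (-1) := by
  rw [MulChar.inv_apply_eq_inv', inv_eq_of_mul_eq_one_right χ.apply_neg_one_mul_self]

variable [NeZero q]

lemma dBinom_inv_inv (X Y : DirichletCharacter ℂ q) :
    dBinom Y⁻¹ X⁻¹ = X (-1) * Y (-1) * dBinom X Y := by
  simp only [dBinom, conjChar_eq_inv, inv_inv, DirichletCharacter.inv_apply_neg_one,
    jacobiSum_comm Y⁻¹ X]
  linear_combination (X (-1) / q * jacobiSum X Y⁻¹) * Y.apply_neg_one_mul_self.symm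

lemma dBinom_reflect_summand (A B C D E χ : DirichletCharacter ℂ q) :
    dBinom (A * (A * χ)⁻¹) (A * χ)⁻¹ * dBinom (A * D⁻¹ * (A * χ)⁻¹) (A * B⁻¹ * (A * χ)⁻¹) *
        dBinom (A * E⁻¹ * (A * χ)⁻¹) (A * C⁻¹ * (A * χ)⁻¹) =
      (A * B * C * D * E) (-1) *
        (dBinom (A * χ) χ * dBinom (B * χ) (D * χ) * dBinom (C * χ) (E * χ)) := by
  have hA : A * (A * χ)⁻¹ = χ⁻¹ := by rw [mul_inv, mul_inv_cancel_left]
  have hX (X : DirichletCharacter ℂ q) : A * X⁻¹ * (A * χ)⁻¹ = (X * χ)⁻¹ := by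
    rw [mul_inv, mul_inv, mul_mul_mul_comm, mul_inv_cancel, one_mul]
  rw [hA, hX D, hX B, hX E, hX C, dBinom_inv_inv, dBinom_inv_inv, dBinom_inv_inv]
  simp only [MulChar.coeToFun_mul, Pi.mul_apply]
  linear_combination (A (-1) * B (-1) * C (-1) * D (-1) * E (-1) *
      (dBinom (A * χ) χ * dBinom (B * χ) (D * χ) * dBinom (C * χ) (E * χ)) *
      (χ (-1) ^ 4 + χ (-1) ^ 2 + 1)) * χ.apply_neg_one_mul_self

end

theorem threeF₂_transform₂_general (q : ℕ) [NeZero q] (A B C D E : DirichletCharacter ℂ q) :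
    threeF₂ A B C D E 1 =
      (A * B * C * D * E) (-1) *
        threeF₂ A (A * conjChar D) (A * conjChar E) (A * conjChar B) (A * conjChar C) 1 := by
  have hreflect : Function.Bijective fun χ : DirichletCharacter ℂ q ↦ (A * χ)⁻¹ :=
    ((Equiv.mulLeft A).trans (Equiv.inv _)).bijective
  simp only [threeF₂, map_one, mul_one, conjChar_eq_inv]
  conv_rhs => rw [← finsum_comp _ hreflect]
  simp only [dBinom_reflect_summand, ← mul_finsum]
  linear_combination (q / (Nat.totient q : ℂ) * ∑ᶠ χ : DirichletCharacter ℂ q,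
      dBinom (A * χ) χ * dBinom (B * χ) (D * χ) * dBinom (C * χ) (E * χ)) *
    (A * B * C * D * E).apply_neg_one_mul_self.symm

theorem threeF₂_transform₂ (p α : ℕ) (hp : p.Prime) (hodd : Odd p) (hα : 1 ≤ α)
    (q : ℕ) (hq : q = p ^ α) [NeZero q] (A B C D E : DirichletCharacter ℂ q) :
    threeF₂ A B C D E 1 =
      (A * B * C * D * E) (-1) *
        threeF₂ A (A * conjChar D) (A * conjChar E) (A * conjChar B) (A * conjChar C) 1 :=
  threeF₂_transform₂_general q A B C D E
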